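/- arXiv:2405.17090 — 5 statements merged into one kernel-verified Lean document; each statement's English description precedes it below -/
import Mathlib

section
/- Let S be a symmetric m×m real matrix with non-positive off-diagonal entries. Then for all vectors u, v in ℝ^m with u ≥ 0 (componentwise) and v > 0 (componentwise), the inequality ⟨S v, u²/v⟩ ≤ ⟨S u, u⟩ holds, where u²/v denotes the componentwise quotient (u_i)²/v_i and ⟨·,·⟩ is the Euclidean inner product. (Discrete Picone inequality.) -/
open Matrix

/-- Discrete Picone inequality. -/
theorem discrete_picone (m : ℕ) (S : Matrix (Fin m) (Fin m) ℝ)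
    (hsym : Sᵀ = S) (hoff : ∀ i j, i ≠ j → S i j ≤ 0)
    (u v : Fin m → ℝ) (hu : ∀ i, 0 ≤ u i) (hv : ∀ i, 0 < v i) :
    ∑ i, ∑ j, S i j * v j * (u i) ^ 2 / v i ≤ ∑ i, ∑ j, S i j * u i * u j := by
  have hS : ∀ i j, S j i = S i j := fun i j => by
    have := congrFun (congrFun hsym i) j
    simpa [Matrix.transpose_apply] using this
  set f : Fin m → Fin m → ℝ :=
    fun i j => S i j * u i * u j - S i j * v j * (u i) ^ 2 / v i with hf
  have key : ∀ i j, 0 ≤ f i j + f j i := by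
    intro i j
    by_cases h : i = j
    · subst h
      have hvi := (hv i).ne'
      simp only [hf]
      field_simp
      ring_nf
      nlinarith [sq_nonneg (u i)]
    · have hSij := hoff i j h
      have hvi := hv i
      have hvj := hv j
      simp only [hf, hS i j]
      have hle : S i j * v j * u i ^ 2 / v i + S i j * v i * u j ^ 2 / v j
          ≤ S i j * u i * u j + S i j * u j * u i := by
        rw [div_add_div _ _ hvi.ne' hvj.ne', div_le_iff₀ (mul_pos hvi hvj)]
        nlinarith [sq_nonneg (v j * u i - v i * u j)]
      linarith
  have hsum : 0 ≤ ∑ i, ∑ j, (f i j + f j i) :=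
    Finset.sum_nonneg fun i _ => Finset.sum_nonneg fun j _ => key i j
  have hswap : ∑ i, ∑ j, f j i = ∑ i, ∑ j, f i j := Finset.sum_comm
  have : 0 ≤ 2 * ∑ i, ∑ j, f i j := by
    have : ∑ i, ∑ j, (f i j + f j i) = (∑ i, ∑ j, f i j) + ∑ i, ∑ j, f j i := by
      simp [Finset.sum_add_distrib]
    rw [this, hswap] at hsum
    linarith
  have hfin : 0 ≤ ∑ i, ∑ j, f i j := by linarith
  have : ∑ i, ∑ j, f i j
      = (∑ i, ∑ j, S i j * u i * u j) - ∑ i, ∑ j, S i j * v j * (u i) ^ 2 / v i := by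
    simp [hf, Finset.sum_sub_distrib]
  linarith [this ▸ hfin]
end

section
/- Let S be a symmetric m×m real matrix with non-positive off-diagonal entries. Then the function F : {w ∈ ℝ^m : w ≥ 0} → ℝ defined by F(w) = √wᵀ S √w (where √w is the componentwise square root) is convex, i.e., for all nonnegative w, v and t ∈ [0,1], F(t·v + (1−t)·w) ≤ t·F(v) + (1−t)·F(w). -/
open Matrix

lemma cs_aux (x y z u t : ℝ) (ht0 : 0 ≤ t) (ht1 : t ≤ 1) :
    (t * (x * y) + (1 - t) * (z * u)) ^ 2 ≤
      (t * x ^ 2 + (1 - t) * z ^ 2) * (t * y ^ 2 + (1 - t) * u ^ 2) := by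
  nlinarith [mul_nonneg (mul_nonneg ht0 (sub_nonneg.mpr ht1)) (sq_nonneg (x * u - y * z))]

lemma sqrt_concave_aux (a b c d t : ℝ) (ha : 0 ≤ a) (hb : 0 ≤ b) (hc : 0 ≤ c)
    (hd : 0 ≤ d) (ht0 : 0 ≤ t) (ht1 : t ≤ 1) :
    t * (Real.sqrt a * Real.sqrt b) + (1 - t) * (Real.sqrt c * Real.sqrt d) ≤
      Real.sqrt (t * a + (1 - t) * c) * Real.sqrt (t * b + (1 - t) * d) := by
  have hx : (0:ℝ) ≤ t * a + (1 - t) * c := by nlinarith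
  rw [← Real.sqrt_mul hx (t * b + (1 - t) * d)]
  apply Real.le_sqrt_of_sq_le
  have h := cs_aux (Real.sqrt a) (Real.sqrt b) (Real.sqrt c) (Real.sqrt d) t ht0 ht1
  rw [Real.sq_sqrt ha, Real.sq_sqrt hb, Real.sq_sqrt hc, Real.sq_sqrt hd] at h
  exact h

/-- Convexity of w ↦ √wᵀ S √w on the nonnegative orthant. -/
theorem sqrt_quadratic_form_convex (m : ℕ) (S : Matrix (Fin m) (Fin m) ℝ)
    (hsym : Sᵀ = S) (hoff : ∀ i j, i ≠ j → S i j ≤ 0)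
    (w v : Fin m → ℝ) (hw : ∀ i, 0 ≤ w i) (hv : ∀ i, 0 ≤ v i)
    (t : ℝ) (ht0 : 0 ≤ t) (ht1 : t ≤ 1) :
    ∑ i, ∑ j, S i j * Real.sqrt ((t • v + (1 - t) • w) i) *
        Real.sqrt ((t • v + (1 - t) • w) j) ≤
      t * (∑ i, ∑ j, S i j * Real.sqrt (v i) * Real.sqrt (v j)) +
        (1 - t) * (∑ i, ∑ j, S i j * Real.sqrt (w i) * Real.sqrt (w j)) := by
  have hu : ∀ i, (t • v + (1 - t) • w) i = t * v i + (1 - t) * w i := by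
    intro i; simp [smul_eq_mul]
  calc ∑ i, ∑ j, S i j * Real.sqrt ((t • v + (1 - t) • w) i) *
        Real.sqrt ((t • v + (1 - t) • w) j)
      ≤ ∑ i, ∑ j, (t * (S i j * Real.sqrt (v i) * Real.sqrt (v j)) +
          (1 - t) * (S i j * Real.sqrt (w i) * Real.sqrt (w j))) := by
        apply Finset.sum_le_sum; intro i _
        apply Finset.sum_le_sum; intro j _
        rw [hu i, hu j]
        by_cases hij : i = j
        · subst hij
          rw [mul_assoc, Real.mul_self_sqrt (by nlinarith [hv i, hw i]),
            mul_assoc, Real.mul_self_sqrt (hv i),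
            mul_assoc, Real.mul_self_sqrt (hw i)]
          ring_nf
          linarith
        · have key := sqrt_concave_aux (v i) (v j) (w i) (w j) t (hv i) (hv j) (hw i) (hw j) ht0 ht1
          have hS := hoff i j hij
          calc S i j * Real.sqrt (t * v i + (1 - t) * w i) * Real.sqrt (t * v j + (1 - t) * w j)
              = S i j * (Real.sqrt (t * v i + (1 - t) * w i) * Real.sqrt (t * v j + (1 - t) * w j)) := by ring
            _ ≤ S i j * (t * (Real.sqrt (v i) * Real.sqrt (v j)) +
                (1 - t) * (Real.sqrt (w i) * Real.sqrt (w j))) :=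
                mul_le_mul_of_nonpos_left key hS
            _ = t * (S i j * Real.sqrt (v i) * Real.sqrt (v j)) +
                (1 - t) * (S i j * Real.sqrt (w i) * Real.sqrt (w j)) := by ring
    _ = t * (∑ i, ∑ j, S i j * Real.sqrt (v i) * Real.sqrt (v j)) +
        (1 - t) * (∑ i, ∑ j, S i j * Real.sqrt (w i) * Real.sqrt (w j)) := by
        simp [Finset.sum_add_distrib, Finset.mul_sum]
end

section
/- Let A be an m×m real matrix that is the sum of a symmetric M-matrix S (symmetric, positive definite, non-positive off-diagonal entries, entrywise nonnegative inverse) and a nonnegative diagonal matrix D. Then A is invertible and A⁻¹ is entrywise nonnegative. -/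
/-!
A positive definite matrix `A` whose off-diagonal entries are nonpositive is monotone: if
`A x ≥ 0` then `x ≥ 0`. Indeed, split `x = x⁺ - x⁻`; since `x⁺` and `x⁻` have disjoint supports,
only off-diagonal entries of `A` enter `x⁻ ⬝ A x⁺`, so it is `≤ 0`, and then
`0 ≤ x⁻ ⬝ A x = x⁻ ⬝ A x⁺ - x⁻ ⬝ A x⁻` forces `x⁻ ⬝ A x⁻ ≤ 0`, i.e. `x⁻ = 0`.
Applied to the columns of `A⁻¹` this gives `A⁻¹ ≥ 0`. Adding a nonnegative diagonal keeps both
positive definiteness and the sign pattern, so the theorem applies to `S + D`.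
-/

open Matrix

lemma Real.negPart_mul_posPart (a : ℝ) : a⁻ * a⁺ = 0 := by
  rcases le_total a 0 with h | h
  · simp [posPart_eq_zero.2 h]
  · simp [negPart_eq_zero.2 h]

namespace Matrix

variable {n : Type*}

def IsZMatrix (A : Matrix n n ℝ) : Prop :=
  ∀ i j, i ≠ j → A i j ≤ 0

lemma IsZMatrix.add_diagonal [DecidableEq n] {A : Matrix n n ℝ} (hA : A.IsZMatrix)
    (d : n → ℝ) : (A + diagonal d).IsZMatrix := by
  intro i j hij
  simpa [diagonal_apply_ne d hij] using hA i j hij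

variable [Fintype n]

lemma IsZMatrix.dotProduct_mulVec_nonpos {A : Matrix n n ℝ} (hA : A.IsZMatrix) {u v : n → ℝ}
    (hu : 0 ≤ u) (hv : 0 ≤ v) (huv : ∀ i, u i * v i = 0) : u ⬝ᵥ A *ᵥ v ≤ 0 := by
  simp only [dotProduct, mulVec, Finset.mul_sum]
  refine Finset.sum_nonpos fun i _ => Finset.sum_nonpos fun j _ => ?_
  obtain rfl | hij := eq_or_ne i j
  · rw [mul_left_comm, huv, mul_zero]
  · exact mul_nonpos_of_nonneg_of_nonpos (hu i)
      (mul_nonpos_of_nonpos_of_nonneg (hA i j hij) (hv j))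

lemma PosDef.nonneg_of_nonneg_mulVec [DecidableEq n] {A : Matrix n n ℝ} (hpd : A.PosDef)
    (hZ : A.IsZMatrix) {x : n → ℝ} (hx : 0 ≤ A *ᵥ x) : 0 ≤ x := by
  have hcross : x⁻ ⬝ᵥ A *ᵥ x⁺ ≤ 0 :=
    hZ.dotProduct_mulVec_nonpos (negPart_nonneg x) (posPart_nonneg x)
      fun i => Real.negPart_mul_posPart (x i)
  have hsplit : x⁻ ⬝ᵥ A *ᵥ x = x⁻ ⬝ᵥ A *ᵥ x⁺ - x⁻ ⬝ᵥ A *ᵥ x⁻ := by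
    rw [← dotProduct_sub, ← mulVec_sub, posPart_sub_negPart]
  have hneg : x⁻ = 0 := by
    by_contra hne
    have hpos := hpd.dotProduct_mulVec_pos hne
    have hnonneg : 0 ≤ x⁻ ⬝ᵥ A *ᵥ x := dotProduct_nonneg_of_nonneg (negPart_nonneg x) hx
    simp only [star_trivial] at hpos
    linarith
  exact negPart_eq_zero.1 hneg

lemma PosDef.inv_apply_nonneg [DecidableEq n] {A : Matrix n n ℝ} (hpd : A.PosDef)
    (hZ : A.IsZMatrix) (i j : n) : 0 ≤ A⁻¹ i j := by
  have hcol : A *ᵥ (A⁻¹ *ᵥ Pi.single j 1) = Pi.single j 1 := by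
    rw [mulVec_mulVec, mul_nonsing_inv A ((isUnit_iff_isUnit_det A).1 hpd.isUnit), one_mulVec]
  have := hpd.nonneg_of_nonneg_mulVec hZ (hcol ▸ Pi.single_nonneg.2 zero_le_one) i
  simpa [mulVec_single_one] using this

end Matrix

theorem M_matrix_plus_diagonal_general (m : ℕ) (S : Matrix (Fin m) (Fin m) ℝ)
    (hpd : S.PosDef) (hoff : ∀ i j, i ≠ j → S i j ≤ 0)
    (d : Fin m → ℝ) (hd : ∀ i, 0 ≤ d i) :
    IsUnit (S + Matrix.diagonal d) ∧ ∀ i j, 0 ≤ (S + Matrix.diagonal d)⁻¹ i j := by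
  have hA : (S + diagonal d).PosDef := hpd.add_posSemidef (posSemidef_diagonal_iff.2 hd)
  exact ⟨hA.isUnit, hA.inv_apply_nonneg (IsZMatrix.add_diagonal hoff d)⟩

/-- The sum of a symmetric M-matrix and a nonnegative diagonal matrix is invertible
with entrywise nonnegative inverse. -/
theorem M_matrix_plus_diagonal (m : ℕ) (S : Matrix (Fin m) (Fin m) ℝ)
    (hsym : Sᵀ = S) (hpd : S.PosDef) (hoff : ∀ i j, i ≠ j → S i j ≤ 0)
    (hSinv : ∀ i j, 0 ≤ S⁻¹ i j)
    (d : Fin m → ℝ) (hd : ∀ i, 0 ≤ d i) :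
    IsUnit (S + Matrix.diagonal d) ∧ ∀ i j, 0 ≤ (S + Matrix.diagonal d)⁻¹ i j :=
  M_matrix_plus_diagonal_general m S hpd hoff d hd
end

section
/- Let S be a symmetric m×m real matrix with non-positive off-diagonal entries, and u ∈ ℝ^m. Suppose there exist indices k, l and a path (k = i₁, …, i_p = l) of distinct indices with S_{i_q i_{q+1}} ≠ 0 for all q, such that u_k < 0 < u_l and u_j ≠ 0 for all j. Then there exists an index r along the path with u_{i_r}·u_{i_{r+1}} < 0, and for this r it holds that S_{i_r i_{r+1}}·|u_{i_r}|·|u_{i_{r+1}}| < S_{i_r i_{r+1}}·u_{i_r}·u_{i_{r+1}}; consequently ⟨S|u|,|u|⟩ < ⟨S u, u⟩ strictly. -/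
open Matrix

/-- Strict decrease of the quadratic form under componentwise absolute value in the
presence of a sign change along a connected path. -/
theorem quadratic_form_abs_lt (m : ℕ) (S : Matrix (Fin m) (Fin m) ℝ)
    (hsym : Sᵀ = S) (hoff : ∀ i j, i ≠ j → S i j ≤ 0)
    (u : Fin m → ℝ) (hu : ∀ j, u j ≠ 0)
    (k l : Fin m) (huk : u k < 0) (hul : 0 < u l)
    (p : ℕ) (hp : 2 ≤ p) (i : ℕ → Fin m)
    (hinj : ∀ q q', q < p → q' < p → i q = i q' → q = q')
    (hfirst : i 0 = k) (hlast : i (p - 1) = l)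
    (hpath : ∀ q, q + 1 < p → S (i q) (i (q + 1)) ≠ 0) :
    (∃ r, r + 1 < p ∧ u (i r) * u (i (r + 1)) < 0 ∧
        S (i r) (i (r + 1)) * |u (i r)| * |u (i (r + 1))| <
          S (i r) (i (r + 1)) * u (i r) * u (i (r + 1))) ∧
      ∑ a, ∑ b, S a b * |u a| * |u b| < ∑ a, ∑ b, S a b * u a * u b := by
  classical
  -- find the first index along the path where u is positive
  have hex : ∃ q, q < p ∧ 0 < u (i q) :=
    ⟨p - 1, Nat.sub_lt (by omega) one_pos, hlast ▸ hul⟩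
  set r0 := Nat.find hex with hr0def
  obtain ⟨hr0p, hr0pos⟩ := Nat.find_spec hex
  have hr0ne : r0 ≠ 0 := by
    intro h
    rw [← hr0def, h, hfirst] at hr0pos
    linarith
  set r := r0 - 1 with hrdef
  have hr1 : r + 1 = r0 := by omega
  have hrp : r + 1 < p := by omega
  have hurneg : u (i r) < 0 := by
    have hmin := Nat.find_min hex (show r < r0 by omega)
    push_neg at hmin
    have := hmin (by omega)
    rcases lt_or_eq_of_le this with h | h
    · exact h
    · exact absurd h (hu _)
  have hurpos : 0 < u (i (r + 1)) := by rw [hr1]; exact hr0pos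
  have hne : i r ≠ i (r + 1) := by
    intro h
    have := hinj r (r + 1) (by omega) hrp h
    omega
  have hSneg : S (i r) (i (r + 1)) < 0 :=
    lt_of_le_of_ne (hoff _ _ hne) (hpath r hrp)
  have hprod : u (i r) * u (i (r + 1)) < 0 := mul_neg_of_neg_of_pos hurneg hurpos
  have hstrict : S (i r) (i (r + 1)) * |u (i r)| * |u (i (r + 1))| <
      S (i r) (i (r + 1)) * u (i r) * u (i (r + 1)) := by
    rw [abs_of_neg hurneg, abs_of_pos hurpos]
    nlinarith [mul_pos (mul_pos (neg_pos.2 hSneg) (neg_pos.2 hurneg)) hurpos]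
  refine ⟨⟨r, hrp, hprod, hstrict⟩, ?_⟩
  have hle : ∀ x ∈ (Finset.univ ×ˢ Finset.univ : Finset (Fin m × Fin m)),
      S x.1 x.2 * |u x.1| * |u x.2| ≤ S x.1 x.2 * u x.1 * u x.2 := by
    rintro ⟨a, b⟩ -
    by_cases hab : a = b
    · subst hab
      simp only
      rw [mul_assoc, mul_assoc, abs_mul_abs_self]
    · have hS := hoff a b hab
      have h1 : u a * u b ≤ |u a| * |u b| := by
        rw [← abs_mul]; exact le_abs_self _
      nlinarith [mul_le_mul_of_nonpos_left h1 hS]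
  have key := Finset.sum_lt_sum hle
    ⟨(i r, i (r + 1)), Finset.mem_product.2 ⟨Finset.mem_univ _, Finset.mem_univ _⟩, hstrict⟩
  simpa [Fintype.sum_prod_type] using key
end

section
/- Let E : ℝ^m → ℝ be defined by E(w) = (1/2)·√wᵀ S √w + (1/2)·⟨c, w⟩ + (κ/4)·∑_j d_j w_j² on the convex set C = {w ∈ ℝ^m : w ≥ 0, ⟨d, w⟩ = 1}, where S is symmetric with non-positive off-diagonal entries, c ≥ 0, d > 0 componentwise, and κ > 0. Then E is strictly convex on C, and hence has at most one minimizer on C. -/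
open Matrix Real

private lemma geo_concave (a b c d t : ℝ) (ha : 0 ≤ a) (hb : 0 ≤ b) (hc : 0 ≤ c)
    (hd : 0 ≤ d) (ht0 : 0 ≤ t) (ht1 : t ≤ 1) :
    t * (Real.sqrt a * Real.sqrt c) + (1 - t) * (Real.sqrt b * Real.sqrt d) ≤
      Real.sqrt (t * a + (1 - t) * b) * Real.sqrt (t * c + (1 - t) * d) := by
  have h1t : (0:ℝ) ≤ 1 - t := by linarith
  have hL : 0 ≤ t * (Real.sqrt a * Real.sqrt c) + (1 - t) * (Real.sqrt b * Real.sqrt d) := by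
    positivity
  have hR : 0 ≤ Real.sqrt (t * a + (1 - t) * b) * Real.sqrt (t * c + (1 - t) * d) := by
    positivity
  have hR2 : (Real.sqrt (t * a + (1 - t) * b) * Real.sqrt (t * c + (1 - t) * d)) ^ 2
      = (t * a + (1 - t) * b) * (t * c + (1 - t) * d) := by
    rw [mul_pow, Real.sq_sqrt (by positivity), Real.sq_sqrt (by positivity)]
  have e1 : Real.sqrt a ^ 2 = a := Real.sq_sqrt ha
  have e2 : Real.sqrt b ^ 2 = b := Real.sq_sqrt hb
  have e3 : Real.sqrt c ^ 2 = c := Real.sq_sqrt hc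
  have e4 : Real.sqrt d ^ 2 = d := Real.sq_sqrt hd
  have hsq : (t * (Real.sqrt a * Real.sqrt c) + (1 - t) * (Real.sqrt b * Real.sqrt d)) ^ 2
      ≤ (Real.sqrt (t * a + (1 - t) * b) * Real.sqrt (t * c + (1 - t) * d)) ^ 2 := by
    rw [hR2]
    have f1 : (Real.sqrt a * Real.sqrt c) ^ 2 = a * c := by rw [mul_pow, e1, e3]
    have f2 : (Real.sqrt b * Real.sqrt d) ^ 2 = b * d := by rw [mul_pow, e2, e4]
    have f3 : (Real.sqrt a * Real.sqrt d) ^ 2 = a * d := by rw [mul_pow, e1, e4]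
    have f4 : (Real.sqrt b * Real.sqrt c) ^ 2 = b * c := by rw [mul_pow, e2, e3]
    have f5 : (Real.sqrt a * Real.sqrt c) * (Real.sqrt b * Real.sqrt d)
        = (Real.sqrt a * Real.sqrt d) * (Real.sqrt b * Real.sqrt c) := by ring
    nlinarith [f1, f2, f3, f4, f5, mul_nonneg ht0 h1t,
      sq_nonneg (Real.sqrt a * Real.sqrt d - Real.sqrt b * Real.sqrt c)]
  nlinarith [hsq, hL, hR]

private lemma key_strict (m : ℕ) (S : Matrix (Fin m) (Fin m) ℝ)
    (hoff : ∀ i j, i ≠ j → S i j ≤ 0)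
    (c d : Fin m → ℝ) (hd : ∀ j, 0 < d j)
    (κ : ℝ) (hκ : 0 < κ)
    (w v : Fin m → ℝ) (hw : ∀ j, 0 ≤ w j) (hv : ∀ j, 0 ≤ v j) (hne : w ≠ v)
    (t : ℝ) (ht0 : 0 < t) (ht1 : t < 1) :
    (1 / 2) * ∑ i, ∑ j, S i j * Real.sqrt ((t • w + (1-t) • v) i) * Real.sqrt ((t • w + (1-t) • v) j) +
        (1 / 2) * ∑ j, c j * ((t • w + (1-t) • v) j) + (κ / 4) * ∑ j, d j * ((t • w + (1-t) • v) j) ^ 2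
    < t * ((1 / 2) * ∑ i, ∑ j, S i j * Real.sqrt (w i) * Real.sqrt (w j) +
        (1 / 2) * ∑ j, c j * w j + (κ / 4) * ∑ j, d j * (w j) ^ 2)
      + (1-t) * ((1 / 2) * ∑ i, ∑ j, S i j * Real.sqrt (v i) * Real.sqrt (v j) +
        (1 / 2) * ∑ j, c j * v j + (κ / 4) * ∑ j, d j * (v j) ^ 2) := by
  have h1t : (0:ℝ) < 1 - t := by linarith
  have hu : ∀ j, (t • w + (1-t) • v) j = t * w j + (1-t) * v j := by
    intro j; simp [smul_eq_mul]
  -- Term 1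
  have T1 : ∑ i, ∑ j, S i j * Real.sqrt ((t • w + (1-t) • v) i) * Real.sqrt ((t • w + (1-t) • v) j)
      ≤ t * (∑ i, ∑ j, S i j * Real.sqrt (w i) * Real.sqrt (w j))
        + (1-t) * (∑ i, ∑ j, S i j * Real.sqrt (v i) * Real.sqrt (v j)) := by
    rw [Finset.mul_sum, Finset.mul_sum, ← Finset.sum_add_distrib]
    apply Finset.sum_le_sum
    intro i _
    rw [Finset.mul_sum, Finset.mul_sum, ← Finset.sum_add_distrib]
    apply Finset.sum_le_sum
    intro j _
    rw [hu i, hu j]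
    by_cases hij : i = j
    · subst hij
      have ew : Real.sqrt (w i) * Real.sqrt (w i) = w i := Real.mul_self_sqrt (hw i)
      have ev : Real.sqrt (v i) * Real.sqrt (v i) = v i := Real.mul_self_sqrt (hv i)
      have eu : Real.sqrt (t * w i + (1-t) * v i) * Real.sqrt (t * w i + (1-t) * v i)
          = t * w i + (1-t) * v i := Real.mul_self_sqrt
            (add_nonneg (mul_nonneg ht0.le (hw i)) (mul_nonneg h1t.le (hv i)))
      apply le_of_eq
      calc S i i * Real.sqrt (t * w i + (1-t) * v i) * Real.sqrt (t * w i + (1-t) * v i)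
          = S i i * (Real.sqrt (t * w i + (1-t) * v i) * Real.sqrt (t * w i + (1-t) * v i)) := by
            ring
        _ = S i i * (t * w i + (1-t) * v i) := by rw [eu]
        _ = t * (S i i * (Real.sqrt (w i) * Real.sqrt (w i)))
            + (1-t) * (S i i * (Real.sqrt (v i) * Real.sqrt (v i))) := by rw [ew, ev]; ring
        _ = t * (S i i * Real.sqrt (w i) * Real.sqrt (w i))
            + (1-t) * (S i i * Real.sqrt (v i) * Real.sqrt (v i)) := by ring
    · have hS := hoff i j hij
      have hg := geo_concave (w i) (v i) (w j) (v j) t (hw i) (hv i) (hw j) (hv j)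
        ht0.le ht1.le
      nlinarith [hg]
  -- Term 2 equality
  have T2 : ∑ j, c j * ((t • w + (1-t) • v) j)
      = t * (∑ j, c j * w j) + (1-t) * (∑ j, c j * v j) := by
    rw [Finset.mul_sum, Finset.mul_sum, ← Finset.sum_add_distrib]
    apply Finset.sum_congr rfl
    intro j _; rw [hu j]; ring
  -- Term 3 strict
  obtain ⟨j0, hj0⟩ : ∃ j, w j ≠ v j := by
    by_contra h; push_neg at h; exact hne (funext h)
  have T3 : ∑ j, d j * ((t • w + (1-t) • v) j) ^ 2
      < t * (∑ j, d j * (w j) ^ 2) + (1-t) * (∑ j, d j * (v j) ^ 2) := by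
    rw [Finset.mul_sum, Finset.mul_sum, ← Finset.sum_add_distrib]
    apply Finset.sum_lt_sum
    · intro j _
      rw [hu j]
      nlinarith [mul_nonneg (hd j).le
        (mul_nonneg (mul_nonneg ht0.le h1t.le) (sq_nonneg (w j - v j)))]
    · refine ⟨j0, Finset.mem_univ j0, ?_⟩
      rw [hu j0]
      have hne0 : w j0 - v j0 ≠ 0 := sub_ne_zero.mpr hj0
      have hsq : 0 < (w j0 - v j0)^2 :=
        lt_of_le_of_ne (sq_nonneg _) (Ne.symm (pow_ne_zero 2 hne0))
      nlinarith [mul_pos (hd j0) (mul_pos (mul_pos ht0 h1t) hsq)]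
  have T3' := mul_lt_mul_of_pos_left T3 (show (0:ℝ) < κ/4 by positivity)
  linarith [T1, T3']

/-- Strict convexity of the density energy functional and uniqueness of minimizers. -/
theorem energy_strictly_convex (m : ℕ) (S : Matrix (Fin m) (Fin m) ℝ)
    (hsym : Sᵀ = S) (hoff : ∀ i j, i ≠ j → S i j ≤ 0)
    (c d : Fin m → ℝ) (hc : ∀ j, 0 ≤ c j) (hd : ∀ j, 0 < d j)
    (κ : ℝ) (hκ : 0 < κ) :
    letI C : Set (Fin m → ℝ) := {w | (∀ j, 0 ≤ w j) ∧ ∑ j, d j * w j = 1}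
    letI E : (Fin m → ℝ) → ℝ := fun w =>
      (1 / 2) * ∑ i, ∑ j, S i j * Real.sqrt (w i) * Real.sqrt (w j) +
        (1 / 2) * ∑ j, c j * w j + (κ / 4) * ∑ j, d j * (w j) ^ 2
    (∀ w ∈ C, ∀ v ∈ C, w ≠ v → ∀ t : ℝ, 0 < t → t < 1 →
        E (t • w + (1 - t) • v) < t * E w + (1 - t) * E v) ∧
      (∀ w ∈ C, ∀ v ∈ C, (∀ z ∈ C, E w ≤ E z) → (∀ z ∈ C, E v ≤ E z) → w = v) := by
  have hstrict : ∀ w : Fin m → ℝ, ((∀ j, 0 ≤ w j) ∧ ∑ j, d j * w j = 1) →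
      ∀ v : Fin m → ℝ, ((∀ j, 0 ≤ v j) ∧ ∑ j, d j * v j = 1) → w ≠ v →
      ∀ t : ℝ, 0 < t → t < 1 →
      (1 / 2) * ∑ i, ∑ j, S i j * Real.sqrt ((t • w + (1-t) • v) i) * Real.sqrt ((t • w + (1-t) • v) j) +
        (1 / 2) * ∑ j, c j * ((t • w + (1-t) • v) j) + (κ / 4) * ∑ j, d j * ((t • w + (1-t) • v) j) ^ 2
      < t * ((1 / 2) * ∑ i, ∑ j, S i j * Real.sqrt (w i) * Real.sqrt (w j) +
          (1 / 2) * ∑ j, c j * w j + (κ / 4) * ∑ j, d j * (w j) ^ 2)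
        + (1-t) * ((1 / 2) * ∑ i, ∑ j, S i j * Real.sqrt (v i) * Real.sqrt (v j) +
          (1 / 2) * ∑ j, c j * v j + (κ / 4) * ∑ j, d j * (v j) ^ 2) :=
    fun w hw v hv hne t ht0 ht1 =>
      key_strict m S hoff c d hd κ hκ w v hw.1 hv.1 hne t ht0 ht1
  refine ⟨fun w hw v hv hne t ht0 ht1 => hstrict w hw v hv hne t ht0 ht1, ?_⟩
  intro w hw v hv hminw hminv
  by_contra hne
  set u : Fin m → ℝ := (1/2 : ℝ) • w + (1 - (1/2 : ℝ)) • v with hudef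
  have huC : (∀ j, 0 ≤ u j) ∧ ∑ j, d j * u j = 1 := by
    constructor
    · intro j
      have h1 := hw.1 j; have h2 := hv.1 j
      simp only [hudef, Pi.add_apply, Pi.smul_apply, smul_eq_mul]
      linarith
    · have h : ∑ j, d j * u j = (1/2) * ∑ j, d j * w j + (1/2) * ∑ j, d j * v j := by
        rw [Finset.mul_sum, Finset.mul_sum, ← Finset.sum_add_distrib]
        apply Finset.sum_congr rfl
        intro j _
        simp only [hudef, Pi.add_apply, Pi.smul_apply, smul_eq_mul]
        ring
      rw [h, hw.2, hv.2]; norm_num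
  have h1 := hstrict w hw v hv hne (1/2) (by norm_num) (by norm_num)
  have h2 := hminw u huC
  have h3 := hminv u huC
  simp only [Set.mem_setOf_eq] at h2 h3
  rw [← hudef] at h1
  linarith
end
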